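/- Let f be a conjugation-invariant functional on TL_{1,2} with values in an R-module M, let n ≥ 1, and set s_n = f(t^n). Suppose the equation s_n = −((1+u²)/u)·u^{4n+2}·f(t_1^n σ_1) holds (the equation coming from a positive braid band move on t^n). Then the equation s_n = −((1+u²)/u)·u^{4n−2}·f(t_1^n σ_1^{−1}) (coming from a negative braid band move on t^n) holds if and only if (u⁴ − 1)·(s_n − u^{4n}·f(t_1^n)) = 0 in M. -/

import Mathlib

/- Common setup: the mixed braid group `B_{1,n}`, the generalized Hecke algebra
of type B `H_{1,n}(u)`, and the generalized Temperley–Lieb algebra of type B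
`TL_{1,n}`, following the paper's presentations. The generator `none` is `t`
and `some i` is `σ_{i+1}` for `i : Fin (n-1)`. -/

/-- Generators of the mixed braid group `B_{1,n}`: `none` is `t`,
`some i` is `σ_{i+1}`. -/
abbrev B1Gen (n : ℕ) := Option (Fin (n - 1))

/-- The generator `t` in the free group. -/
def tF (n : ℕ) : FreeGroup (B1Gen n) := FreeGroup.of none

/-- The generator `σ_{i+1}` in the free group. -/
def sF (n : ℕ) (i : Fin (n - 1)) : FreeGroup (B1Gen n) := FreeGroup.of (some i)

/-- The relators of the mixed braid group `B_{1,n}`: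
`σ₁tσ₁t = tσ₁tσ₁`; `tσ_i = σ_it` for `i > 1`; the braid relations
`σ_iσ_{i+1}σ_i = σ_{i+1}σ_iσ_{i+1}`; and `σ_iσ_j = σ_jσ_i` for `|i−j| > 1`. -/
def mixedRels (n : ℕ) : Set (FreeGroup (B1Gen n)) :=
  { r | (∃ i : Fin (n - 1), (i : ℕ) = 0 ∧
          r = sF n i * tF n * sF n i * tF n * (tF n * sF n i * tF n * sF n i)⁻¹) ∨
        (∃ i : Fin (n - 1), 0 < (i : ℕ) ∧
          r = tF n * sF n i * (sF n i * tF n)⁻¹) ∨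
        (∃ i j : Fin (n - 1), (j : ℕ) = (i : ℕ) + 1 ∧
          r = sF n i * sF n j * sF n i * (sF n j * sF n i * sF n j)⁻¹) ∨
        (∃ i j : Fin (n - 1), (i : ℕ) + 1 < (j : ℕ) ∧
          r = sF n i * sF n j * (sF n j * sF n i)⁻¹) }

/-- The mixed braid group `B_{1,n}`. -/
abbrev MixedBraidGroup (n : ℕ) := PresentedGroup (mixedRels n)

/-- The generator `t` of `B_{1,n}`. -/
def tB (n : ℕ) : MixedBraidGroup n := PresentedGroup.of none

/-- The generator `σ_{i+1}` of `B_{1,n}`. -/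
def sB (n : ℕ) (i : Fin (n - 1)) : MixedBraidGroup n := PresentedGroup.of (some i)

variable (R : Type) [CommRing R] (u : Rˣ)

/-- The quadratic Hecke relations `σ_i² = (u − u⁻¹)σ_i + 1` in the group
algebra `R[B_{1,n}]`. -/
inductive heckeRel (n : ℕ) :
    MonoidAlgebra R (MixedBraidGroup n) → MonoidAlgebra R (MixedBraidGroup n) → Prop where
  | quad (i : Fin (n - 1)) :
      heckeRel n
        (MonoidAlgebra.of R (MixedBraidGroup n) (sB n i) *
          MonoidAlgebra.of R (MixedBraidGroup n) (sB n i))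
        (((u : R) - ((u⁻¹ : Rˣ) : R)) • MonoidAlgebra.of R (MixedBraidGroup n) (sB n i) + 1)

/-- The generalized Hecke algebra of type B, `H_{1,n}(u)`. -/
abbrev Hecke (n : ℕ) := RingQuot (heckeRel R u n)

/-- The canonical (multiplicative) map `B_{1,n} → H_{1,n}(u)`. -/
noncomputable def toHecke (n : ℕ) : MixedBraidGroup n →* Hecke R u n :=
  (RingQuot.mkRingHom (heckeRel R u n)).toMonoidHom.comp
    (MonoidAlgebra.of R (MixedBraidGroup n))

/-- The Temperley–Lieb relations: the generators
`1 + u(σ_i + σ_{i+1}) + u²(σ_iσ_{i+1} + σ_{i+1}σ_i) + u³σ_iσ_{i+1}σ_i`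
of the defining ideal are set to `0`. -/
inductive tlRel (n : ℕ) : Hecke R u n → Hecke R u n → Prop where
  | cubic (i j : Fin (n - 1)) (hij : (j : ℕ) = (i : ℕ) + 1) :
      tlRel n
        (1 + (u : R) • (toHecke R u n (sB n i) + toHecke R u n (sB n j))
          + ((u : R) ^ 2) • (toHecke R u n (sB n i) * toHecke R u n (sB n j)
              + toHecke R u n (sB n j) * toHecke R u n (sB n i))
          + ((u : R) ^ 3) •
              (toHecke R u n (sB n i) * toHecke R u n (sB n j) * toHecke R u n (sB n i)))
        0

/-- The generalized Temperley–Lieb algebra of type B, `TL_{1,n}`. -/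
abbrev TL (n : ℕ) := RingQuot (tlRel R u n)

/-- The canonical (multiplicative) map `B_{1,n} → TL_{1,n}`. -/
noncomputable def toTL (n : ℕ) : MixedBraidGroup n →* TL R u n :=
  (RingQuot.mkRingHom (tlRel R u n)).toMonoidHom.comp (toHecke R u n)

/-- The element `t` of `TL_{1,n}`. -/
noncomputable def tT (n : ℕ) : TL R u n := toTL R u n (tB n)

/-- The element `σ₁` of `TL_{1,n}` (needs `2 ≤ n`). -/
noncomputable def σ₁T (n : ℕ) (hn : 2 ≤ n) : TL R u n :=
  toTL R u n (sB n ⟨0, by omega⟩)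

/-- The element `σ₁⁻¹` of `TL_{1,n}`, the image of the inverse braid
generator (needs `2 ≤ n`). -/
noncomputable def σ₁invT (n : ℕ) (hn : 2 ≤ n) : TL R u n :=
  toTL R u n (sB n ⟨0, by omega⟩)⁻¹

/-- The looping element `t₁ = σ₁ t σ₁` of `TL_{1,n}` (needs `2 ≤ n`). -/
noncomputable def t₁T (n : ℕ) (hn : 2 ≤ n) : TL R u n :=
  toTL R u n (sB n ⟨0, by omega⟩ * tB n * sB n ⟨0, by omega⟩)

/-!
In `TL_{1,2}` the quadratic Hecke relation gives `σ₁⁻¹ = σ₁ - (u - u⁻¹)`, so by linearity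
`f(t₁ⁿσ₁⁻¹) = f(t₁ⁿσ₁) - (u - u⁻¹) f(t₁ⁿ)`. Multiplying the negative equation by the unit `u⁴`
turns its `f(t₁ⁿσ₁)`-term into the right-hand side of the positive one, i.e. into `sₙ`, and
what remains is `u⁴ sₙ = sₙ + (u⁴ - 1) u^{4n} f(t₁ⁿ)`.
-/

theorem eq_sub_smul_one_of_mul_self_eq {S A : Type*} [CommRing S] [Ring A] [Algebra S A]
    {x y : A} {c : S} (hx : x * x = c • x + 1) (hy : y * x = 1) : y = x - c • 1 :=
  calc y = y * (x * x - c • x) := by rw [hx, add_sub_cancel_left, mul_one]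
    _ = (y * x) * x - c • (y * x) := by rw [mul_sub, mul_assoc, mul_smul_comm]
    _ = x - c • 1 := by rw [hy, one_mul]

theorem LinearMap.map_mul_sub_smul_one {S A M : Type*} [CommRing S] [Ring A] [Algebra S A]
    [AddCommGroup M] [Module S M] (f : A →ₗ[S] M) (x y : A) (c : S) :
    f (x * (y - c • 1)) = f (x * y) - c • f x := by
  rw [mul_sub, mul_smul_comm, mul_one, map_sub, map_smul]

theorem toTL_sB_mul_self (n : ℕ) (i : Fin (n - 1)) :
    toTL R u n (sB n i) * toTL R u n (sB n i)
      = ((u : R) - ((u⁻¹ : Rˣ) : R)) • toTL R u n (sB n i) + 1 := by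
  have h := congrArg (RingQuot.mkAlgHom R (tlRel R u n))
    (RingQuot.mkAlgHom_rel R (heckeRel.quad (R := R) (u := u) (n := n) i))
  simp only [map_mul, map_add, map_one, map_smul] at h
  simp only [toTL, toHecke, MonoidHom.comp_apply, ← RingQuot.mkAlgHom_coe R]
  exact h

theorem toTL_sB_inv (n : ℕ) (i : Fin (n - 1)) :
    toTL R u n (sB n i)⁻¹
      = toTL R u n (sB n i) - ((u : R) - ((u⁻¹ : Rˣ) : R)) • 1 := by
  have hinv : toTL R u n (sB n i)⁻¹ * toTL R u n (sB n i) = 1 := by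
    rw [← map_mul, inv_mul_cancel, map_one]
  exact eq_sub_smul_one_of_mul_self_eq (A := TL R u n) (toTL_sB_mul_self R u n i) hinv

theorem σ₁invT_eq (n : ℕ) (hn : 2 ≤ n) :
    σ₁invT R u n hn = σ₁T R u n hn - ((u : R) - ((u⁻¹ : Rˣ) : R)) • 1 :=
  toTL_sB_inv R u n _

theorem bbm_negative_iff_of_positive {M : Type*} [AddCommGroup M] [Module R M] (e : ℕ) (s A B : M)
    (hpos : s = (-((1 + (u : R) ^ 2) * ((u⁻¹ : Rˣ) : R)) * (u : R) ^ (e + 4)) • A) :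
    s = (-((1 + (u : R) ^ 2) * ((u⁻¹ : Rˣ) : R)) * (u : R) ^ e) •
          (A - ((u : R) - ((u⁻¹ : Rˣ) : R)) • B)
      ↔ ((u : R) ^ 4 - 1) • (s - (u : R) ^ (e + 2) • B) = 0 := by
  set c : R := -((1 + (u : R) ^ 2) * ((u⁻¹ : Rˣ) : R))
  have hA : (u : R) ^ 4 * (c * (u : R) ^ e) = c * (u : R) ^ (e + 4) := by ring
  have hB : c * (u : R) ^ (e + 4) * ((u : R) - ((u⁻¹ : Rˣ) : R))
      = -(((u : R) ^ 4 - 1) * (u : R) ^ (e + 2)) := by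
    linear_combination (-(1 + (u : R) ^ 2) * ((u : R) ^ (e + 4)
      - (u : R) ^ (e + 2) * ((u : R) * ((u⁻¹ : Rˣ) : R) + 1))) * u.mul_inv
  have hscaled : (u : R) ^ 4 • ((c * (u : R) ^ e) • (A - ((u : R) - ((u⁻¹ : Rˣ) : R)) • B))
      = s + (((u : R) ^ 4 - 1) * (u : R) ^ (e + 2)) • B := by
    rw [smul_sub, smul_sub, smul_smul, smul_smul, smul_smul, hA, hB, ← hpos, neg_smul,
      sub_neg_eq_add]
  rw [← (u.isUnit.pow 4).smul_left_cancel (x := s), hscaled]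
  constructor <;> intro h <;> linear_combination (norm := module) h

theorem bbm_equations_equivalence (M : Type) [AddCommGroup M] [Module R M]
    (n : ℕ) (hn : 1 ≤ n)
    (f : TL R u 2 →ₗ[R] M)
    (hpos : f (tT R u 2 ^ n)
      = (-((1 + (u : R) ^ 2) * ((u⁻¹ : Rˣ) : R)) * (u : R) ^ (4 * n + 2)) •
          f (t₁T R u 2 le_rfl ^ n * σ₁T R u 2 le_rfl)) :
    (f (tT R u 2 ^ n)
      = (-((1 + (u : R) ^ 2) * ((u⁻¹ : Rˣ) : R)) * (u : R) ^ (4 * n - 2)) •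
          f (t₁T R u 2 le_rfl ^ n * σ₁invT R u 2 le_rfl))
    ↔ ((u : R) ^ 4 - 1) • (f (tT R u 2 ^ n) - (u : R) ^ (4 * n) • f (t₁T R u 2 le_rfl ^ n))
        = 0 := by
  have hneg : f (t₁T R u 2 le_rfl ^ n * σ₁invT R u 2 le_rfl)
      = f (t₁T R u 2 le_rfl ^ n * σ₁T R u 2 le_rfl)
        - ((u : R) - ((u⁻¹ : Rˣ) : R)) • f (t₁T R u 2 le_rfl ^ n) := by
    rw [σ₁invT_eq]
    exact f.map_mul_sub_smul_one (A := TL R u 2) _ _ _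
  obtain ⟨e, he⟩ : ∃ e, 4 * n = e + 2 := ⟨4 * n - 2, by omega⟩
  rw [he] at hpos
  rw [hneg, he, Nat.add_sub_cancel]
  exact bbm_negative_iff_of_positive R u e _ _ _ hpos
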